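/- Let f be a bounded automorphism and g a contracting automorphism of the regular rooted d-ary tree T, and suppose f and g are conjugate in Aut(T). Then f and g are conjugate in the group F(X) of finite-state automorphisms if and only if g has finite orbit-signalizer. -/

import Mathlib

open List

/-- Vertices of the rooted `d`-ary tree `T`: finite words over the alphabet
`X = Fin d`. -/
abbrev Vertex (d : ℕ) := List (Fin d)

/-- `g` is an automorphism of the rooted `d`-ary tree: a bijection of the
vertex set `X*` preserving word length and the prefix relation. -/
def IsTreeAut {d : ℕ} (g : Equiv.Perm (Vertex d)) : Prop :=
  (∀ v : Vertex d, (g v).length = v.length) ∧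
    ∀ v w : Vertex d, g v <+: g (v ++ w)

theorem IsTreeAut.prefix_mono {d : ℕ} {g : Equiv.Perm (Vertex d)} (hg : IsTreeAut g)
    {u u' : Vertex d} (h : u <+: u') : g u <+: g u' := by
  obtain ⟨t, rfl⟩ := h
  exact hg.2 u t

/-- The automorphism group `Aut(T)` of the rooted `d`-ary tree, as a subgroup
of the group of permutations of the vertex set. -/
def treeAut (d : ℕ) : Subgroup (Equiv.Perm (Vertex d)) where
  carrier := {g | IsTreeAut g}
  one_mem' := ⟨fun _ => rfl, fun v w => ⟨w, rfl⟩⟩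
  mul_mem' := by
    intro g h hg hh
    obtain ⟨hg1, hg2⟩ := hg
    obtain ⟨hh1, hh2⟩ := hh
    refine ⟨fun v => ?_, fun v w => ?_⟩
    · simp [Equiv.Perm.mul_apply, hg1, hh1]
    · obtain ⟨t, ht⟩ := hh2 v w
      simp only [Equiv.Perm.mul_apply]
      rw [← ht]
      exact hg2 (h v) t
  inv_mem' := by
    intro g hgmem
    obtain ⟨hg1, hg2⟩ := hgmem
    have hg : IsTreeAut g := ⟨hg1, hg2⟩
    have hlen' : ∀ v : Vertex d, (g⁻¹ v).length = v.length := by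
      intro v
      conv_rhs => rw [← (Equiv.Perm.eq_inv_iff_eq (f := g) (x := g⁻¹ v) (y := v)).mp rfl]
      rw [hg1]
    refine ⟨hlen', fun v w => ?_⟩
    have hle : (g⁻¹ v).length ≤ (g⁻¹ (v ++ w)).length := by
      have h1 := hlen' v
      have h2 := hlen' (v ++ w)
      rw [List.length_append] at h2
      omega
    have htp : (g⁻¹ (v ++ w)).take (g⁻¹ v).length <+: g⁻¹ (v ++ w) :=
      List.take_prefix _ _
    have hgtp : g ((g⁻¹ (v ++ w)).take (g⁻¹ v).length) <+: v ++ w := by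
      have := hg.prefix_mono htp
      rwa [(Equiv.Perm.eq_inv_iff_eq (f := g) (x := g⁻¹ (v ++ w)) (y := v ++ w)).mp rfl] at this
    have hlen_tp : (g ((g⁻¹ (v ++ w)).take (g⁻¹ v).length)).length = v.length := by
      rw [hg1, List.length_take, min_eq_left hle, hlen' v]
    have hveq : g ((g⁻¹ (v ++ w)).take (g⁻¹ v).length) = v := by
      have h1 := List.prefix_iff_eq_take.mp hgtp
      have h2 := List.prefix_iff_eq_take.mp (List.prefix_append v w)
      rw [h1, hlen_tp]
      exact h2.symm
    have hkey : (g⁻¹ (v ++ w)).take (g⁻¹ v).length = g⁻¹ v := by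
      apply g.injective
      rw [hveq, (Equiv.Perm.eq_inv_iff_eq (f := g) (x := g⁻¹ v) (y := v)).mp rfl]
    rw [← hkey]
    exact htp

open scoped Classical in
/-- The state (section) `g|_v` of `g` at the vertex `v` : the unique
automorphism satisfying `g (v ++ w) = g v ++ (g|_v) w` for all `w`. -/
noncomputable def state {d : ℕ} (g : Equiv.Perm (Vertex d)) (v : Vertex d) :
    Equiv.Perm (Vertex d) :=
  if h : Function.Bijective (fun w : Vertex d => (g (v ++ w)).drop v.length) then
    Equiv.ofBijective _ h
  else 1

/-- A finite-state automorphism: one having finitely many states.  The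
finite-state automorphisms form the group `F(X)`. -/
def FiniteState {d : ℕ} (g : Equiv.Perm (Vertex d)) : Prop :=
  (Set.range fun v : Vertex d => state g v).Finite

/-- The cardinality of the orbit `Orb_a(v)` of the vertex `v` under the cyclic
group generated by `a`. -/
noncomputable def orbitCard {d : ℕ} (a : Equiv.Perm (Vertex d)) (v : Vertex d) : ℕ :=
  Nat.card (Set.range fun n : ℤ => (a ^ n) v)

/-- The orbit-signalizer `OS(a) = { a^m|_v : v ∈ X^*, m = |Orb_a(v)| }`. -/
noncomputable def OS {d : ℕ} (a : Equiv.Perm (Vertex d)) : Set (Equiv.Perm (Vertex d)) :=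
  {s | ∃ v : Vertex d, s = state (a ^ orbitCard a v) v}

/-- `a` has finite orbit-signalizer. -/
def FiniteOS {d : ℕ} (a : Equiv.Perm (Vertex d)) : Prop := (OS a).Finite

/-- A self-similar (state-closed) subgroup. -/
def SelfSimilar {d : ℕ} (G : Subgroup (Equiv.Perm (Vertex d))) : Prop :=
  ∀ g ∈ G, ∀ v : Vertex d, state g v ∈ G

/-- A contracting group: there is a finite set `N ⊆ G` such that every
`g ∈ G` has all its states in `N` from some level on. -/
def ContractingGroup {d : ℕ} (G : Subgroup (Equiv.Perm (Vertex d))) : Prop :=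
  ∃ N : Set (Equiv.Perm (Vertex d)), N.Finite ∧ N ⊆ (G : Set (Equiv.Perm (Vertex d))) ∧
    ∀ g ∈ G, ∃ n : ℕ, ∀ v : Vertex d, n ≤ v.length → state g v ∈ N

/-- A contracting automorphism: the self-similar group generated by all of its
states is contracting. -/
def ContractingAut {d : ℕ} (f : Equiv.Perm (Vertex d)) : Prop :=
  ContractingGroup (Subgroup.closure (Set.range fun v : Vertex d => state f v))

/-- The activity sequence `θ_k(g)`: the number of vertices `v` of level `k`
whose state `g|_v` acts nontrivially on the first level `X`. -/
noncomputable def theta {d : ℕ} (g : Equiv.Perm (Vertex d)) (k : ℕ) : ℕ :=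
  Nat.card {v : Vertex d // v.length = k ∧ ∃ x : Fin d, state g v [x] ≠ [x]}

/-- A bounded automorphism: a finite-state automorphism with bounded activity
sequence.  The bounded automorphisms form the group `Pol(0)`. -/
def BoundedAut {d : ℕ} (g : Equiv.Perm (Vertex d)) : Prop :=
  FiniteState g ∧ ∃ C : ℕ, ∀ k : ℕ, theta g k ≤ C

/-- A polynomial automorphism (an element of `Pol(∞)`): a finite-state
automorphism whose activity sequence is polynomially bounded. -/
def PolyAut {d : ℕ} (g : Equiv.Perm (Vertex d)) : Prop :=
  FiniteState g ∧ ∃ p : Polynomial ℕ, ∀ k : ℕ, theta g k ≤ p.eval k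

/-- A finitary automorphism (an element of `Pol(-1)`): all states at some
level are trivial. -/
def Finitary {d : ℕ} (g : Equiv.Perm (Vertex d)) : Prop :=
  ∃ k : ℕ, ∀ v : Vertex d, v.length = k → state g v = 1

/-- A functionally recursive automorphism: a member of some finitely generated
self-similar subgroup of `Aut(T)`.  These form the group `FR(X)`. -/
def FunctionallyRecursive {d : ℕ} (g : Equiv.Perm (Vertex d)) : Prop :=
  ∃ G : Subgroup (Equiv.Perm (Vertex d)), G ≤ treeAut d ∧ SelfSimilar G ∧
    (∃ S : Set (Equiv.Perm (Vertex d)), S.Finite ∧ G = Subgroup.closure S) ∧ g ∈ G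

/-!
If `h f h⁻¹ = g` with `h` finite-state, then `OS(g)` consists of conjugates of elements of
`OS(f)` by states of `h`, and `OS(f)` is finite because `f` is bounded: `a ^ q |_v` is the
product of the states of `a` along the orbit of `v`, of which only boundedly many are nontrivial.

Conversely, a conjugator of `(f, g)` is built level by level: pick representatives `ρ` of the
`⟨f⟩`-orbits on the first level, send `f ^ i (ρ)` to `g ^ i (t ρ)` for a fixed conjugator `t`,
and recurse into the pair `(f ^ m |_ρ, g ^ m |_{t ρ}) ∈ OS(f) × OS(g)`, `m = |Orb_f(ρ)|`. Its
state at `f ^ N (W)`, with `W` a word of representatives and `N < |Orb_f(W)|`, is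
`g ^ N |_{h W} · h' · (f ^ N |_W)⁻¹` with `h'` the conjugator of a pair in `OS(f) × OS(g)`.
So `h` is finite-state once the partial powers `a ^ q |_v`, `q ≤ |Orb_a(v)|`, have finitely
many sections for `a = f` and `a = g`. For `f` this is the count above. For `g`, splitting `q`
along `u = u₁ u₂` writes `g ^ q |_u` as a product of `|u|` elements of a finite set `K`, and
contraction keeps these products short: products of `2 ^ L` elements of `K` have their states
in `K` below depth `O(L)`, so the states at depth `D` of products of `D + 1` elements fall back
into `K` for large `D`.
-/

open Equiv Function
open scoped Pointwise

section

variable {d : ℕ}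

namespace IsTreeAut

variable {g h : Perm (Vertex d)}

lemma one : IsTreeAut (1 : Perm (Vertex d)) := (treeAut d).one_mem

lemma inv (hg : IsTreeAut g) : IsTreeAut g⁻¹ := (treeAut d).inv_mem hg

lemma mul (hg : IsTreeAut g) (hh : IsTreeAut h) : IsTreeAut (g * h) :=
  (treeAut d).mul_mem hg hh

lemma pow (hg : IsTreeAut g) (n : ℕ) : IsTreeAut (g ^ n) := (treeAut d).pow_mem hg n

lemma zpow (hg : IsTreeAut g) (n : ℤ) : IsTreeAut (g ^ n) := (treeAut d).zpow_mem hg n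

lemma apply_nil (hg : IsTreeAut g) : g [] = [] := List.length_eq_zero_iff.mp (hg.1 [])

lemma apply_append_eq_drop (hg : IsTreeAut g) (v w : Vertex d) :
    g (v ++ w) = g v ++ (g (v ++ w)).drop v.length := by
  have hv : g v = (g (v ++ w)).take v.length := by
    rw [← hg.1 v]; exact List.prefix_iff_eq_take.mp (hg.2 v w)
  rw [hv, List.take_append_drop]

lemma bijective_drop (hg : IsTreeAut g) (v : Vertex d) :
    Bijective fun w : Vertex d => (g (v ++ w)).drop v.length := by
  refine ⟨fun w w' h => ?_, fun u => ⟨(g⁻¹ (g v ++ u)).drop v.length, ?_⟩⟩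
  · have e := hg.apply_append_eq_drop v w
    rw [show (g (v ++ w)).drop v.length = (g (v ++ w')).drop v.length from h,
      ← hg.apply_append_eq_drop v w'] at e
    exact List.append_cancel_left (g.injective e)
  · have e := hg.inv.apply_append_eq_drop (g v) u
    simp only [Perm.coe_inv, symm_apply_apply, hg.1 v] at e ⊢
    rw [← e, apply_symm_apply, ← hg.1 v, List.drop_left]

lemma state_apply (hg : IsTreeAut g) (v w : Vertex d) :
    state g v w = (g (v ++ w)).drop v.length := by
  rw [state, dif_pos (hg.bijective_drop v)]
  rfl

lemma apply_append (hg : IsTreeAut g) (v w : Vertex d) :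
    g (v ++ w) = g v ++ state g v w := by
  rw [hg.state_apply]
  exact hg.apply_append_eq_drop v w

lemma state_isTreeAut (hg : IsTreeAut g) (v : Vertex d) : IsTreeAut (state g v) := by
  refine ⟨fun w => ?_, fun u t => ?_⟩
  · rw [hg.state_apply, List.length_drop, hg.1, List.length_append]
    omega
  · rw [hg.state_apply, hg.state_apply, ← List.append_assoc, hg.apply_append (v ++ u),
      List.drop_append_of_le_length (by simp [hg.1])]
    exact List.prefix_append _ _

lemma state_nil (hg : IsTreeAut g) : state g [] = g := by
  ext w : 1
  simp [hg.state_apply]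

lemma state_state (hg : IsTreeAut g) (v w : Vertex d) :
    state (state g v) w = state g (v ++ w) := by
  ext u : 1
  rw [(hg.state_isTreeAut v).state_apply, hg.state_apply, hg.state_apply, List.append_assoc,
    List.drop_drop, List.length_append, Nat.add_comm]

end IsTreeAut

lemma state_one (v : Vertex d) : state (1 : Perm (Vertex d)) v = 1 := by
  ext w : 1
  simp [IsTreeAut.one.state_apply]

lemma state_mul {a b : Perm (Vertex d)} (ha : IsTreeAut a) (hb : IsTreeAut b) (v : Vertex d) :
    state (a * b) v = state a (b v) * state b v := by
  ext w : 1
  rw [Perm.mul_apply, (ha.mul hb).state_apply, ha.state_apply, ← hb.apply_append, hb.1]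
  simp

lemma state_inv {a : Perm (Vertex d)} (ha : IsTreeAut a) (v : Vertex d) :
    state a⁻¹ (a v) = (state a v)⁻¹ := by
  have h := state_mul ha.inv ha v
  rw [inv_mul_cancel, state_one] at h
  exact eq_inv_of_mul_eq_one_left h.symm

lemma state_pow_of_apply_eq {a : Perm (Vertex d)} (ha : IsTreeAut a) {v : Vertex d}
    (hv : a v = v) (n : ℕ) : state (a ^ n) v = state a v ^ n := by
  induction n with
  | zero => simp [state_one]
  | succ n ih =>
    rw [pow_succ, state_mul (ha.pow n) ha, hv, ih, pow_succ]

lemma state_conj {h c : Perm (Vertex d)} (hh : IsTreeAut h) (hc : IsTreeAut c)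
    {v : Vertex d} (hv : c v = v) :
    state (h * c * h⁻¹) (h v) = state h v * state c v * (state h v)⁻¹ := by
  rw [state_mul (hh.mul hc) hh.inv, state_inv hh, state_mul hh hc]
  simp [hv]

section Orbit

variable {a : Perm (Vertex d)}

lemma orbitCard_eq_minimalPeriod (a : Perm (Vertex d)) (v : Vertex d) :
    orbitCard a v = minimalPeriod a v := by
  have horbit : (Set.range fun n : ℤ => (a ^ n) v) = MulAction.orbit (Subgroup.zpowers a) v := by
    ext u
    constructor
    · rintro ⟨n, rfl⟩
      exact ⟨⟨a ^ n, n, rfl⟩, rfl⟩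
    · rintro ⟨⟨_, n, rfl⟩, rfl⟩
      exact ⟨n, rfl⟩
  rw [orbitCard, horbit, Nat.card_congr (MulAction.orbitZPowersEquiv a v), Nat.card_zmod]
  rfl

lemma IsTreeAut.orbitCard_pos (ha : IsTreeAut a) (v : Vertex d) : 0 < orbitCard a v := by
  have : Finite (Set.range fun n : ℤ => (a ^ n) v) :=
    ((List.finite_length_eq (Fin d) v.length).subset (by
      rintro _ ⟨n, rfl⟩; exact (ha.zpow n).1 v)).to_subtype
  exact Nat.card_pos

lemma pow_apply_eq_self_iff (a : Perm (Vertex d)) (v : Vertex d) (n : ℕ) :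
    (a ^ n) v = v ↔ orbitCard a v ∣ n := by
  rw [orbitCard_eq_minimalPeriod, ← isPeriodicPt_iff_minimalPeriod_dvd]
  rfl

lemma pow_orbitCard_apply (a : Perm (Vertex d)) (v : Vertex d) : (a ^ orbitCard a v) v = v :=
  (pow_apply_eq_self_iff a v _).2 dvd_rfl

lemma eq_of_pow_apply_eq {v : Vertex d} {i j : ℕ} (hi : i < orbitCard a v)
    (hj : j < orbitCard a v) (h : (a ^ i) v = (a ^ j) v) : i = j := by
  rw [orbitCard_eq_minimalPeriod] at hi hj
  exact iterate_injOn_Iio_minimalPeriod hi hj h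

lemma orbitCard_conj (t a : Perm (Vertex d)) (v : Vertex d) :
    orbitCard (t * a * t⁻¹) (t v) = orbitCard a v := by
  have h : ∀ n, ((t * a * t⁻¹) ^ n) (t v) = t v ↔ (a ^ n) v = v := fun n => by
    simp [conj_pow, t.injective.eq_iff]
  exact Nat.dvd_antisymm ((pow_apply_eq_self_iff _ _ _).1 ((h _).2 (pow_orbitCard_apply a v)))
    ((pow_apply_eq_self_iff _ _ _).1 ((h _).1 (pow_orbitCard_apply _ _)))

end Orbit

noncomputable def signalizer (a : Perm (Vertex d)) (v : Vertex d) : Perm (Vertex d) :=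
  state (a ^ orbitCard a v) v

lemma signalizer_mem_OS (a : Perm (Vertex d)) (v : Vertex d) : signalizer a v ∈ OS a := ⟨v, rfl⟩

namespace IsTreeAut

variable {a : Perm (Vertex d)}

lemma orbitCard_nil (ha : IsTreeAut a) : orbitCard a [] = 1 :=
  Nat.eq_one_of_dvd_one ((pow_apply_eq_self_iff a [] 1).1 (ha.pow 1).apply_nil)

lemma self_mem_OS (ha : IsTreeAut a) : a ∈ OS a :=
  ⟨[], by rw [ha.orbitCard_nil, pow_one, ha.state_nil]⟩

lemma signalizer_isTreeAut (ha : IsTreeAut a) (v : Vertex d) : IsTreeAut (signalizer a v) :=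
  (ha.pow _).state_isTreeAut v

lemma of_mem_OS (ha : IsTreeAut a) {b : Perm (Vertex d)} (hb : b ∈ OS a) : IsTreeAut b := by
  obtain ⟨v, rfl⟩ := hb
  exact ha.signalizer_isTreeAut v

lemma state_pow_orbitCard_mul (ha : IsTreeAut a) (u : Vertex d) (n : ℕ) :
    state (a ^ (orbitCard a u * n)) u = signalizer a u ^ n := by
  rw [pow_mul, state_pow_of_apply_eq (ha.pow _) (pow_orbitCard_apply a u)]
  rfl

lemma pow_orbitCard_mul_apply_append (ha : IsTreeAut a) (u w : Vertex d) (n : ℕ) :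
    (a ^ (orbitCard a u * n)) (u ++ w) = u ++ (signalizer a u ^ n) w := by
  rw [(ha.pow _).apply_append, ha.state_pow_orbitCard_mul,
    (pow_apply_eq_self_iff a u _).2 (dvd_mul_right _ _)]

lemma pow_orbitCard_apply_append (ha : IsTreeAut a) (u w : Vertex d) :
    (a ^ orbitCard a u) (u ++ w) = u ++ signalizer a u w := by
  simpa using ha.pow_orbitCard_mul_apply_append u w 1

lemma orbitCard_append (ha : IsTreeAut a) (u w : Vertex d) :
    orbitCard a (u ++ w) = orbitCard a u * orbitCard (signalizer a u) w := by
  have key : ∀ n, (a ^ n) (u ++ w) = u ++ w ↔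
      orbitCard a u * orbitCard (signalizer a u) w ∣ n := by
    intro n
    constructor
    · intro h
      rw [(ha.pow n).apply_append] at h
      obtain ⟨hu, hw⟩ := List.append_inj h ((ha.pow n).1 u)
      obtain ⟨s, rfl⟩ := (pow_apply_eq_self_iff a u n).1 hu
      rw [ha.state_pow_orbitCard_mul] at hw
      exact mul_dvd_mul_left _ ((pow_apply_eq_self_iff _ _ _).1 hw)
    · rintro ⟨s, rfl⟩
      rw [mul_assoc, ha.pow_orbitCard_mul_apply_append,
        (pow_apply_eq_self_iff _ _ _).2 (dvd_mul_right _ _)]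
  exact Nat.dvd_antisymm ((pow_apply_eq_self_iff _ _ _).1 ((key _).2 dvd_rfl))
    ((key _).1 (pow_orbitCard_apply a _))

lemma signalizer_signalizer (ha : IsTreeAut a) (u w : Vertex d) :
    signalizer (signalizer a u) w = signalizer a (u ++ w) := by
  rw [signalizer, ← ha.state_pow_orbitCard_mul, (ha.pow _).state_state,
    ← ha.orbitCard_append]
  rfl

lemma signalizer_mem_OS_of_mem {b : Perm (Vertex d)} (ha : IsTreeAut a) (hb : b ∈ OS a)
    (w : Vertex d) : signalizer b w ∈ OS a := by
  obtain ⟨u, rfl⟩ := hb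
  rw [← signalizer, ha.signalizer_signalizer]
  exact signalizer_mem_OS a _

/-- Write `q = r + |Orb_a(u)| Q` with `r < |Orb_a(u)|`. -/
lemma state_pow_append (ha : IsTreeAut a) (u w : Vertex d) (q : ℕ) :
    state (a ^ q) (u ++ w) =
      state (a ^ (q % orbitCard a u)) (u ++ (signalizer a u ^ (q / orbitCard a u)) w) *
        state (signalizer a u ^ (q / orbitCard a u)) w := by
  conv_lhs => rw [← Nat.mod_add_div q (orbitCard a u), pow_add]
  rw [state_mul (ha.pow _) (ha.pow _), ha.pow_orbitCard_mul_apply_append,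
    ← (ha.pow (orbitCard a u * (q / orbitCard a u))).state_state u w, ha.state_pow_orbitCard_mul]

end IsTreeAut

def partialSections (a : Perm (Vertex d)) : Set (Perm (Vertex d)) :=
  {s | ∃ v q, q ≤ orbitCard a v ∧ state (a ^ q) v = s}

lemma OS_subset_partialSections (a : Perm (Vertex d)) : OS a ⊆ partialSections a := by
  rintro _ ⟨v, rfl⟩
  exact ⟨v, _, le_rfl, rfl⟩

theorem Set.Finite.pow {M : Type*} [Monoid M] {s : Set M} (hs : s.Finite) (n : ℕ) :
    (s ^ n).Finite := by
  induction n with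
  | zero => exact Set.finite_one
  | succ n ih => rw [pow_succ]; exact ih.mul hs

section Bounded

variable {a : Perm (Vertex d)}

lemma IsTreeAut.exists_active_of_apply_ne {s : Perm (Vertex d)} (hs : IsTreeAut s)
    {z : Vertex d} (hz : s z ≠ z) : ∃ w : Vertex d, ∃ x : Fin d, state s w [x] ≠ [x] := by
  induction z generalizing s with
  | nil => exact absurd hs.apply_nil hz
  | cons y z ih =>
    by_cases hy : s [y] = [y]
    · have hz' : state s [y] z ≠ z := fun h => hz (by
        simpa [hy, h] using hs.apply_append [y] z)
      obtain ⟨w, x, hx⟩ := ih (hs.state_isTreeAut [y]) hz'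
      exact ⟨[y] ++ w, x, by rwa [← hs.state_state]⟩
    · exact ⟨[], y, by rwa [hs.state_nil]⟩

lemma FiniteState.exists_active_within (ha : IsTreeAut a) (hfs : FiniteState a) :
    ∃ D : ℕ, ∀ v : Vertex d, state a v ≠ 1 →
      ∃ w : Vertex d, w.length ≤ D ∧ ∃ x : Fin d, state a (v ++ w) [x] ≠ [x] := by
  have : ∀ᶠ D in Filter.atTop, ∀ s ∈ Set.range (state a), IsTreeAut s → s ≠ 1 →
      ∃ w : Vertex d, w.length ≤ D ∧ ∃ x : Fin d, state s w [x] ≠ [x] := by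
    refine (Filter.eventually_all_finite hfs).2 fun s _ => ?_
    by_cases hs : IsTreeAut s ∧ s ≠ 1
    · obtain ⟨z, hz⟩ := not_forall.1 fun h => hs.2 (Equiv.ext h)
      obtain ⟨w, x, hx⟩ := hs.1.exists_active_of_apply_ne hz
      exact Filter.eventually_atTop.2 ⟨w.length, fun D hD _ _ => ⟨w, hD, x, hx⟩⟩
    · exact Filter.Eventually.of_forall fun D h1 h2 => absurd ⟨h1, h2⟩ hs
  obtain ⟨D, hD⟩ := this.exists
  refine ⟨D, fun v hv => ?_⟩
  obtain ⟨w, hw, x, hx⟩ := hD _ ⟨v, rfl⟩ (ha.state_isTreeAut v) hv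
  exact ⟨w, hw, x, by rwa [← ha.state_state]⟩

lemma ncard_nontrivial_states_le {C D : ℕ} (hC : ∀ k, theta a k ≤ C)
    (hD : ∀ v : Vertex d, state a v ≠ 1 →
      ∃ w : Vertex d, w.length ≤ D ∧ ∃ x : Fin d, state a (v ++ w) [x] ≠ [x]) (k : ℕ) :
    {v : Vertex d | v.length = k ∧ state a v ≠ 1}.ncard ≤ (D + 1) * C := by
  choose! w hw hact using hD
  let active : ℕ → Set (Vertex d) :=
    fun j => {v | v.length = j ∧ ∃ x : Fin d, state a v [x] ≠ [x]}
  have hfin : (⋃ j : Fin (D + 1), active (k + j)).Finite :=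
    Set.finite_iUnion fun j => (List.finite_length_eq _ _).subset fun v hv => hv.1
  calc {v : Vertex d | v.length = k ∧ state a v ≠ 1}.ncard
      ≤ (⋃ j : Fin (D + 1), active (k + j)).ncard := by
        refine Set.ncard_le_ncard_of_injOn (fun v => v ++ w v) ?_ ?_ hfin
        · rintro v ⟨hv, hne⟩
          exact Set.mem_iUnion.2 ⟨⟨(w v).length, Nat.lt_succ_of_le (hw v hne)⟩,
            by simp [hv], hact v hne⟩
        · rintro v ⟨hv, -⟩ v' ⟨hv', -⟩ h
          exact (List.append_inj h (hv.trans hv'.symm)).1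
    _ ≤ ∑ j : Fin (D + 1), (active (k + j)).ncard := Set.ncard_iUnion_le_of_fintype _
    _ ≤ ∑ _j : Fin (D + 1), C :=
        Finset.sum_le_sum fun j _ => (Nat.card_coe_set_eq _).symm.trans_le (hC _)
    _ = (D + 1) * C := by simp

lemma BoundedAut.exists_ncard_nontrivial_states_le (ha : IsTreeAut a) (hb : BoundedAut a) :
    ∃ B : ℕ, ∀ k, {v : Vertex d | v.length = k ∧ state a v ≠ 1}.ncard ≤ B := by
  obtain ⟨hfs, C, hC⟩ := hb
  obtain ⟨D, hD⟩ := hfs.exists_active_within ha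
  exact ⟨(D + 1) * C, ncard_nontrivial_states_le hC hD⟩

open scoped Classical in
/-- `a ^ q |_v = a|_{a ^ (q - 1) (v)} ⋯ a|_{a (v)} a|_v`. -/
lemma IsTreeAut.state_pow_mem_pow (ha : IsTreeAut a) (v : Vertex d) (q : ℕ) :
    state (a ^ q) v ∈ insert 1 (Set.range (state a)) ^
      ((Finset.range q).filter fun i => state a ((a ^ i) v) ≠ 1).card := by
  induction q with
  | zero => simp [state_one]
  | succ q ih =>
    rw [pow_succ', state_mul ha (ha.pow q), Finset.range_add_one, Finset.filter_insert]
    split_ifs with h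
    · rw [Finset.card_insert_of_notMem (by simp), pow_succ']
      exact Set.mul_mem_mul (Set.mem_insert_of_mem _ ⟨_, rfl⟩) ih
    · rw [not_not.1 h, one_mul]
      exact ih

theorem BoundedAut.finite_partialSections (ha : IsTreeAut a) (hb : BoundedAut a) :
    (partialSections a).Finite := by
  classical
  obtain ⟨B, hB⟩ := hb.exists_ncard_nontrivial_states_le ha
  refine ((hb.1.insert 1).pow B).subset ?_
  rintro _ ⟨v, q, hq, rfl⟩
  refine Set.pow_subset_pow_right (Set.mem_insert _ _) ?_ (ha.state_pow_mem_pow v q)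
  rw [← Set.ncard_coe_finset]
  refine (Set.ncard_le_ncard_of_injOn (fun i => (a ^ i) v) ?_ ?_
    ((List.finite_length_eq (Fin d) v.length).subset fun u hu => hu.1)).trans (hB v.length)
  · intro i hi
    simp only [Finset.coe_filter, Finset.mem_range, Set.mem_ofPred_eq] at hi
    exact ⟨(ha.pow i).1 v, hi.2⟩
  · intro i hi j hj h
    simp only [Finset.coe_filter, Finset.mem_range, Set.mem_ofPred_eq] at hi hj
    exact eq_of_pow_apply_eq (hi.1.trans_le hq) (hj.1.trans_le hq) h

end Bounded

lemma FiniteOS.conj {f h : Perm (Vertex d)} (hf : IsTreeAut f) (hh : IsTreeAut h)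
    (hfs : FiniteState h) (hOS : FiniteOS f) : FiniteOS (h * f * h⁻¹) := by
  refine (hfs.image2 (fun t s => t * s * t⁻¹) hOS).subset ?_
  rintro _ ⟨u, rfl⟩
  obtain ⟨v, rfl⟩ := h.surjective u
  rw [orbitCard_conj, conj_pow, state_conj hh (hf.pow _) (pow_orbitCard_apply f v)]
  exact Set.mem_image2_of_mem ⟨v, rfl⟩ ⟨v, rfl⟩

section Contracting

lemma closure_range_state_le_treeAut {g : Perm (Vertex d)} (hg : IsTreeAut g) :
    Subgroup.closure (Set.range (state g)) ≤ treeAut d :=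
  (Subgroup.closure_le _).2 (Set.range_subset_iff.2 hg.state_isTreeAut)

lemma selfSimilar_closure_range_state {g : Perm (Vertex d)} (hg : IsTreeAut g) :
    SelfSimilar (Subgroup.closure (Set.range (state g))) := by
  have hle := closure_range_state_le_treeAut hg
  intro u hu
  induction hu using Subgroup.closure_induction with
  | mem x hx =>
    obtain ⟨w, rfl⟩ := hx
    exact fun v => Subgroup.subset_closure ⟨w ++ v, (hg.state_state w v).symm⟩
  | one => exact fun v => by rw [state_one]; exact Subgroup.one_mem _
  | mul x y hx hy ihx ihy =>
    exact fun v => by rw [state_mul (hle hx) (hle hy)]; exact Subgroup.mul_mem _ (ihx _) (ihy v)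
  | inv x hx ihx =>
    intro v
    obtain ⟨w, rfl⟩ := x.surjective v
    rw [state_inv (hle hx)]
    exact Subgroup.inv_mem _ (ihx w)

variable {G : Subgroup (Perm (Vertex d))}

lemma ContractingGroup.finiteState (hc : ContractingGroup G) {u : Perm (Vertex d)}
    (hu : u ∈ G) : FiniteState u := by
  obtain ⟨N, hN, -, habs⟩ := hc
  obtain ⟨n, hn⟩ := habs u hu
  refine (hN.union ((List.finite_length_le (Fin d) n).image (state u))).subset ?_
  rintro _ ⟨v, rfl⟩
  rcases le_or_gt n v.length with h | h
  · exact Or.inl (hn v h)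
  · exact Or.inr ⟨v, h.le, rfl⟩

lemma ContractingGroup.exists_stateClosed_superset (hG : G ≤ treeAut d) (hss : SelfSimilar G)
    (hc : ContractingGroup G) {S : Set (Perm (Vertex d))} (hS : S.Finite) (hSG : S ⊆ G) :
    ∃ K : Set (Perm (Vertex d)), K.Finite ∧ S ⊆ K ∧ K ⊆ G ∧
      (∀ κ ∈ K, ∀ v : Vertex d, state κ v ∈ K) ∧
      ∀ u ∈ G, ∃ n : ℕ, ∀ v : Vertex d, n ≤ v.length → state u v ∈ K := by
  obtain ⟨N, hN, hNG, habs⟩ := id hc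
  have hNS : ∀ p ∈ N ∪ S, p ∈ G := fun p hp => hp.elim (hNG ·) (hSG ·)
  have hself : N ∪ S ⊆ ⋃ p ∈ N ∪ S, Set.range (state p) := fun p hp =>
    Set.mem_biUnion hp ⟨[], (hG (hNS p hp)).state_nil⟩
  refine ⟨⋃ p ∈ N ∪ S, Set.range (state p),
    (hN.union hS).biUnion fun p hp => hc.finiteState (hNS p hp),
    fun p hp => hself (Or.inr hp), ?_, ?_, fun u hu => ?_⟩
  · simp only [Set.iUnion_subset_iff]
    rintro p hp _ ⟨w, rfl⟩
    exact hss p (hNS p hp) w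
  · simp only [Set.mem_iUnion]
    rintro _ ⟨p, hp, w, rfl⟩ v
    exact ⟨p, hp, w ++ v, ((hG (hNS p hp)).state_state w v).symm⟩
  · obtain ⟨n, hn⟩ := habs u hu
    exact ⟨n, fun v hv => hself (Or.inl (hn v hv))⟩

end Contracting

lemma exists_depth_forall_state_mem {S K : Set (Perm (Vertex d))} (hS : S.Finite)
    (h : ∀ u ∈ S, ∃ n : ℕ, ∀ v : Vertex d, n ≤ v.length → state u v ∈ K) :
    ∃ n : ℕ, ∀ u ∈ S, ∀ v : Vertex d, n ≤ v.length → state u v ∈ K := by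
  refine (((Filter.eventually_all_finite hS).2 fun u hu => ?_ :
    ∀ᶠ n in Filter.atTop, ∀ u ∈ S, ∀ v : Vertex d, n ≤ v.length → state u v ∈ K)).exists
  obtain ⟨n, hn⟩ := h u hu
  exact Filter.eventually_atTop.2 ⟨n, fun m hm v hv => hn v (hm.trans hv)⟩

section ProductsOfStates

variable {K : Set (Perm (Vertex d))}

lemma state_mem_of_mem_pow_two_pow (hK : K ⊆ treeAut d)
    (hclosed : ∀ κ ∈ K, ∀ v : Vertex d, state κ v ∈ K) {L₀ : ℕ}
    (hL₀ : ∀ x ∈ K * K, ∀ v : Vertex d, L₀ ≤ v.length → state x v ∈ K) (L : ℕ) :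
    ∀ x ∈ K ^ 2 ^ L, ∀ v : Vertex d, L₀ * L ≤ v.length → state x v ∈ K := by
  induction L with
  | zero => simpa using hclosed
  | succ L ih =>
    rw [pow_succ, pow_mul, sq]
    rintro _ ⟨y, hy, z, hz, rfl⟩ v hv
    have hy' : IsTreeAut y := Subgroup.pow_subset hK hy
    have hz' : IsTreeAut z := Subgroup.pow_subset hK hz
    rw [← List.take_append_drop (v.length - L₀) v, ← (hy'.mul hz').state_state,
      state_mul hy' hz']
    refine hL₀ _ (Set.mul_mem_mul (ih y hy _ ?_) (ih z hz _ ?_)) _ ?_ <;>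
      simp [hz'.1, Nat.mul_succ] at hv ⊢ <;> omega

lemma exists_pos_mul_lt_two_pow (c : ℕ) : ∃ L : ℕ, 0 < L ∧ c * L < 2 ^ L := by
  refine ⟨4 * (c + 1), by omega, ?_⟩
  have h : c + 1 < 2 ^ (c + 1) := Nat.lt_two_pow_self
  rw [mul_comm 4, pow_mul]
  generalize 2 ^ (c + 1) = P at h ⊢
  calc c * ((c + 1) * 4) < 4 * P * P := by nlinarith
    _ ≤ P * P * P * P := by
        have : 4 ≤ P * P := by nlinarith
        exact Nat.mul_le_mul_right _ (Nat.mul_le_mul_right _ this)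
    _ = P ^ 4 := by ring

lemma exists_depth_state_mem_of_mem_pow (hK : K ⊆ treeAut d)
    (hclosed : ∀ κ ∈ K, ∀ v : Vertex d, state κ v ∈ K) (h1 : 1 ∈ K) {L₀ : ℕ}
    (hL₀ : ∀ x ∈ K * K, ∀ v : Vertex d, L₀ ≤ v.length → state x v ∈ K) :
    ∃ D : ℕ, 0 < D ∧ ∀ x ∈ K ^ (D + 1), ∀ v : Vertex d, D ≤ v.length → state x v ∈ K := by
  obtain ⟨L, hL, hlt⟩ := exists_pos_mul_lt_two_pow (L₀ + 1)
  refine ⟨(L₀ + 1) * L, Nat.mul_pos L₀.succ_pos hL, fun x hx v hv => ?_⟩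
  exact state_mem_of_mem_pow_two_pow hK hclosed (fun x hx v hv => hL₀ x hx v (by omega)) L x
    (Set.pow_subset_pow_right h1 hlt hx) v hv

end ProductsOfStates

section SignalizerPowers

variable {S K : Set (Perm (Vertex d))}

lemma state_pow_mem_pow_length (hS : ∀ c ∈ S, IsTreeAut c)
    (hSclosed : ∀ c ∈ S, ∀ u : Vertex d, signalizer c u ∈ S)
    (hK : ∀ c ∈ S, ∀ x : Fin d, ∀ r < orbitCard c [x], ∀ v : Vertex d, state (c ^ r) v ∈ K) :
    ∀ u : Vertex d, ∀ c ∈ S, ∀ q < orbitCard c u, state (c ^ q) u ∈ K ^ u.length := by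
  intro u
  induction u with
  | nil =>
    intro c hc q hq
    rw [(hS c hc).orbitCard_nil, Nat.lt_one_iff] at hq
    simp [hq, state_one]
  | cons x u ih =>
    intro c hc q hq
    have hpos := (hS c hc).orbitCard_pos [x]
    rw [← List.singleton_append, (hS c hc).orbitCard_append] at hq
    rw [← List.singleton_append, (hS c hc).state_pow_append, List.length_append,
      List.length_singleton, add_comm, pow_succ']
    exact Set.mul_mem_mul (hK c hc x _ (Nat.mod_lt _ hpos) _)
      (ih _ (hSclosed c hc [x]) _ ((Nat.div_lt_iff_lt_mul hpos).2 (by linarith)))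

/-- Split off the last `D` letters of `u`: the factor coming from the first letters is, by
induction, a state at depth `D` of a product of `D + 1` elements of `K`, hence in `K`. -/
lemma state_pow_mem_pow_succ (hS : ∀ c ∈ S, IsTreeAut c)
    (hSclosed : ∀ c ∈ S, ∀ u : Vertex d, signalizer c u ∈ S)
    (hK : ∀ c ∈ S, ∀ x : Fin d, ∀ r < orbitCard c [x], ∀ v : Vertex d, state (c ^ r) v ∈ K)
    (h1 : 1 ∈ K) {D : ℕ} (hDpos : 0 < D)
    (hD : ∀ x ∈ K ^ (D + 1), ∀ v : Vertex d, D ≤ v.length → state x v ∈ K) (u : Vertex d) :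
    ∀ c ∈ S, ∀ q < orbitCard c u, state (c ^ q) u ∈ K ^ (D + 1) := by
  induction' hn : u.length using Nat.strong_induction_on with n ih generalizing u
  intro c hc q hq
  by_cases hu : u.length ≤ D
  · exact Set.pow_subset_pow_right h1 (by omega)
      (state_pow_mem_pow_length hS hSclosed hK u c hc q hq)
  obtain ⟨u₁, u₂, rfl, hu₂⟩ : ∃ u₁ u₂ : Vertex d, u = u₁ ++ u₂ ∧ u₂.length = D :=
    ⟨_, _, (List.take_append_drop (u.length - D) u).symm, by simp; omega⟩
  have hc' := hS c hc
  have hpos := hc'.orbitCard_pos u₁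
  rw [hc'.orbitCard_append] at hq
  rw [hc'.state_pow_append, ← (hc'.pow _).state_state, pow_succ']
  refine Set.mul_mem_mul (hD _ (ih _ ?_ u₁ rfl c hc _ (Nat.mod_lt _ hpos)) _ ?_) ?_
  · simp only [← hn, List.length_append]
    omega
  · rw [((hS _ (hSclosed c hc u₁)).pow _).1, hu₂]
  · rw [← hu₂]
    exact state_pow_mem_pow_length hS hSclosed hK u₂ _ (hSclosed c hc u₁) _
      ((Nat.div_lt_iff_lt_mul hpos).2 (by linarith))

end SignalizerPowers

theorem ContractingAut.finite_partialSections {g : Perm (Vertex d)} (hg : IsTreeAut g)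
    (hc : ContractingAut g) (hOS : FiniteOS g) : (partialSections g).Finite := by
  set G := Subgroup.closure (Set.range (state g))
  have hG : G ≤ treeAut d := closure_range_state_le_treeAut hg
  have hss : SelfSimilar G := selfSimilar_closure_range_state hg
  have hOSG : OS g ⊆ G := by
    rintro _ ⟨v, rfl⟩
    exact hss _ (G.pow_mem (Subgroup.subset_closure ⟨[], hg.state_nil⟩) _) v
  let P := insert 1 (⋃ c ∈ OS g, ⋃ x : Fin d, (c ^ ·) '' Set.Iio (orbitCard c [x]))
  have hP : P.Finite :=
    (hOS.biUnion fun c _ => Set.finite_iUnion fun x => (Set.finite_Iio _).image _).insert 1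
  have hPG : P ⊆ G := by
    rintro _ (rfl | hp)
    · exact G.one_mem
    · simp only [Set.mem_iUnion] at hp
      obtain ⟨c, hc, x, r, -, rfl⟩ := hp
      exact G.pow_mem (hOSG hc) r
  obtain ⟨K, hKfin, hPK, hKG, hclosed, habs⟩ := hc.exists_stateClosed_superset hG hss hP hPG
  have h1 : 1 ∈ K := hPK (Set.mem_insert 1 _)
  have hK : ∀ c ∈ OS g, ∀ x : Fin d, ∀ r < orbitCard c [x], ∀ v : Vertex d,
      state (c ^ r) v ∈ K := fun c hc x r hr v =>
    hclosed _ (hPK (Or.inr (Set.mem_biUnion hc (Set.mem_iUnion.2 ⟨x, r, hr, rfl⟩)))) v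
  obtain ⟨L₀, hL₀⟩ := exists_depth_forall_state_mem (hKfin.mul hKfin)
    fun x hx => habs x (Subgroup.mul_subset hKG hKG hx)
  obtain ⟨D, hDpos, hD⟩ := exists_depth_state_mem_of_mem_pow (hKG.trans hG) hclosed h1 hL₀
  refine ((hKfin.pow (D + 1)).union hOS).subset ?_
  rintro _ ⟨u, q, hq, rfl⟩
  rcases hq.lt_or_eq with hq | rfl
  · exact Or.inl (state_pow_mem_pow_succ (fun c hc => hg.of_mem_OS hc)
      (fun c hc => hg.signalizer_mem_OS_of_mem hc) hK h1 hDpos hD u g hg.self_mem_OS q hq)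
  · exact Or.inr ⟨u, rfl⟩

section OrbitRepresentatives

variable {a : Perm (Vertex d)}

noncomputable def orbitRep (a : Perm (Vertex d)) (v : Vertex d) : Vertex d :=
  (Quotient.mk (Perm.SameCycle.setoid a) v).out

lemma sameCycle_orbitRep (a : Perm (Vertex d)) (v : Vertex d) : a.SameCycle (orbitRep a v) v :=
  Quotient.mk_out (s := Perm.SameCycle.setoid a) v

lemma orbitRep_eq_of_sameCycle {v w : Vertex d} (h : a.SameCycle v w) :
    orbitRep a v = orbitRep a w :=
  congrArg Quotient.out (Quotient.sound (s := Perm.SameCycle.setoid a) h)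

lemma orbitRep_orbitRep (a : Perm (Vertex d)) (v : Vertex d) :
    orbitRep a (orbitRep a v) = orbitRep a v :=
  orbitRep_eq_of_sameCycle (sameCycle_orbitRep a v)

lemma orbitRep_pow_apply (a : Perm (Vertex d)) (v : Vertex d) (n : ℕ) :
    orbitRep a ((a ^ n) v) = orbitRep a v :=
  (orbitRep_eq_of_sameCycle ⟨n, by simp⟩).symm

/-- Junk for infinite orbits, which tree automorphisms do not have. -/
noncomputable def orbitIdx (a : Perm (Vertex d)) (v : Vertex d) : ℕ :=
  ((sameCycle_orbitRep a v).choose % (orbitCard a (orbitRep a v) : ℤ)).toNat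

lemma IsTreeAut.orbitIdx_lt (ha : IsTreeAut a) (v : Vertex d) :
    orbitIdx a v < orbitCard a (orbitRep a v) := by
  have := ha.orbitCard_pos (orbitRep a v)
  rw [orbitIdx, Int.toNat_lt (Int.emod_nonneg _ (by omega))]
  exact Int.emod_lt_of_pos _ (by omega)

lemma IsTreeAut.pow_orbitIdx_apply (ha : IsTreeAut a) (v : Vertex d) :
    (a ^ orbitIdx a v) (orbitRep a v) = v := by
  have := ha.orbitCard_pos (orbitRep a v)
  rw [orbitIdx, ← zpow_natCast, Int.toNat_of_nonneg (Int.emod_nonneg _ (by omega)),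
    orbitCard_eq_minimalPeriod]
  exact (MulAction.zpow_smul_mod_minimalPeriod a _ _).trans
    (sameCycle_orbitRep a v).choose_spec

lemma IsTreeAut.orbitIdx_eq {ρ : Vertex d} (ha : IsTreeAut a) (hρ : orbitRep a ρ = ρ) {i : ℕ}
    (hi : i < orbitCard a ρ) : orbitIdx a ((a ^ i) ρ) = i := by
  have hrep : orbitRep a ((a ^ i) ρ) = ρ := by rw [orbitRep_pow_apply, hρ]
  refine eq_of_pow_apply_eq (v := ρ) ?_ hi ?_
  · simpa [hrep] using ha.orbitIdx_lt ((a ^ i) ρ)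
  · simpa [hrep] using ha.pow_orbitIdx_apply ((a ^ i) ρ)

lemma IsTreeAut.exists_eq_pow_apply_orbitRep (ha : IsTreeAut a) (x : Fin d) (w : Vertex d) :
    ∃ ρ : Vertex d, ∃ i : ℕ, ∃ w' : Vertex d, ρ.length = 1 ∧ orbitRep a ρ = ρ ∧
      i < orbitCard a ρ ∧ w'.length = w.length ∧ (a ^ i) (ρ ++ w') = x :: w := by
  set i := orbitIdx a [x]
  have hx : (a ^ i) (orbitRep a [x]) = [x] := ha.pow_orbitIdx_apply [x]
  refine ⟨orbitRep a [x], i, state (a ^ i)⁻¹ [x] w, ?_, orbitRep_orbitRep a [x],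
    ha.orbitIdx_lt [x], ((ha.pow i).inv.state_isTreeAut _).1 w, ?_⟩
  · rw [← (ha.pow i).1, hx]
    rfl
  · have hx' : (a ^ i)⁻¹ [x] = orbitRep a [x] := by rw [Perm.inv_eq_iff_eq, hx]
    rw [← hx', ← (ha.pow i).inv.apply_append]
    simp

end OrbitRepresentatives

lemma surjective_of_injective_of_length_eq {α : Type*} [Finite α] {F : List α → List α}
    (hinj : Injective F) (hlen : ∀ v, (F v).length = v.length) : Surjective F := by
  intro u
  let F' : List.Vector α u.length → List.Vector α u.length :=
    fun v => ⟨F v.1, (hlen v.1).trans v.2⟩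
  obtain ⟨v, hv⟩ := Finite.surjective_of_injective (f := F')
    (fun v w h => Subtype.ext (hinj (congrArg Subtype.val h : F v.1 = F w.1))) ⟨u, rfl⟩
  exact ⟨v.1, congrArg Subtype.val hv⟩

def IsConjPair (p : Perm (Vertex d) × Perm (Vertex d)) : Prop :=
  IsTreeAut p.1 ∧ ∃ t : Perm (Vertex d), IsTreeAut t ∧ t * p.1 * t⁻¹ = p.2

open scoped Classical in
noncomputable def pairConj (p : Perm (Vertex d) × Perm (Vertex d)) : Perm (Vertex d) :=
  if h : ∃ t : Perm (Vertex d), IsTreeAut t ∧ t * p.1 * t⁻¹ = p.2 then h.choose else 1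

noncomputable def childPair (p : Perm (Vertex d) × Perm (Vertex d)) (ρ : Vertex d) :
    Perm (Vertex d) × Perm (Vertex d) :=
  (signalizer p.1 ρ, state (p.2 ^ orbitCard p.1 ρ) (pairConj p ρ))

/-- The conjugator of `p = (a, b)` on words of length at most `n`: on the subtree at `a ^ i (ρ)`,
`ρ` a representative, it is `b ^ i ∘ (ρ w ↦ t ρ · h' w) ∘ a ^ -i`, where `t = pairConj p` and
`h'` is the conjugator of `childPair p ρ`. -/
noncomputable def conjugatorAux :
    ℕ → Perm (Vertex d) × Perm (Vertex d) → Vertex d → Vertex d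
  | 0, _, _ => []
  | _ + 1, _, [] => []
  | n + 1, p, x :: w =>
    (p.2 ^ orbitIdx p.1 [x]) (pairConj p (orbitRep p.1 [x]) ++
      conjugatorAux n (childPair p (orbitRep p.1 [x])) ((p.1 ^ orbitIdx p.1 [x])⁻¹ (x :: w)).tail)

noncomputable def conjugatorFun (p : Perm (Vertex d) × Perm (Vertex d)) (v : Vertex d) :
    Vertex d :=
  conjugatorAux v.length p v

open scoped Classical in
noncomputable def conjugator (p : Perm (Vertex d) × Perm (Vertex d)) : Perm (Vertex d) :=
  if h : Bijective (conjugatorFun p) then Equiv.ofBijective _ h else 1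

noncomputable def descendantPair :
    Perm (Vertex d) × Perm (Vertex d) → Vertex d → Perm (Vertex d) × Perm (Vertex d)
  | p, [] => p
  | p, x :: W => descendantPair (childPair p [x]) W

namespace IsConjPair

variable {p : Perm (Vertex d) × Perm (Vertex d)}

lemma pairConj_spec (hp : IsConjPair p) :
    IsTreeAut (pairConj p) ∧ pairConj p * p.1 * (pairConj p)⁻¹ = p.2 := by
  rw [pairConj, dif_pos hp.2]
  exact hp.2.choose_spec

lemma snd_isTreeAut (hp : IsConjPair p) : IsTreeAut p.2 := by
  rw [← hp.pairConj_spec.2]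
  exact (hp.pairConj_spec.1.mul hp.1).mul hp.pairConj_spec.1.inv

lemma snd_pow_apply (hp : IsConjPair p) (n : ℕ) (v : Vertex d) :
    (p.2 ^ n) (pairConj p v) = pairConj p ((p.1 ^ n) v) := by
  rw [← hp.pairConj_spec.2, conj_pow]
  simp

lemma orbitCard_snd (hp : IsConjPair p) (v : Vertex d) :
    orbitCard p.2 (pairConj p v) = orbitCard p.1 v := by
  rw [← orbitCard_conj (pairConj p) p.1, hp.pairConj_spec.2]

lemma isConjPair_childPair (hp : IsConjPair p) (ρ : Vertex d) : IsConjPair (childPair p ρ) := by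
  have ht := hp.pairConj_spec.1
  refine ⟨hp.1.signalizer_isTreeAut ρ, state (pairConj p) ρ, ht.state_isTreeAut ρ, ?_⟩
  rw [childPair, signalizer, ← state_conj ht (hp.1.pow _) (pow_orbitCard_apply _ _),
    ← conj_pow, hp.pairConj_spec.2]

lemma childPair_mem_OS {f g : Perm (Vertex d)} (hf : IsTreeAut f) (hg : IsTreeAut g)
    (hp : IsConjPair p) (hpf : p.1 ∈ OS f) (hpg : p.2 ∈ OS g) (ρ : Vertex d) :
    (childPair p ρ).1 ∈ OS f ∧ (childPair p ρ).2 ∈ OS g := by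
  refine ⟨hf.signalizer_mem_OS_of_mem hpf ρ, ?_⟩
  rw [childPair, ← hp.orbitCard_snd]
  exact hg.signalizer_mem_OS_of_mem hpg _

lemma conjugatorFun_pow_apply (hp : IsConjPair p) {ρ : Vertex d} (hρ : ρ.length = 1)
    (hrep : orbitRep p.1 ρ = ρ) {i : ℕ} (hi : i < orbitCard p.1 ρ) (w : Vertex d) :
    conjugatorFun p ((p.1 ^ i) (ρ ++ w)) =
      (p.2 ^ i) (pairConj p ρ ++ conjugatorFun (childPair p ρ) w) := by
  obtain ⟨y, rfl⟩ := List.length_eq_one_iff.1 hρ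
  have ha := hp.1.pow i
  obtain ⟨x, hx⟩ := List.length_eq_one_iff.1 (ha.1 [y])
  have hv : (p.1 ^ i) ([y] ++ w) = x :: state (p.1 ^ i) [y] w := by rw [ha.apply_append, hx]; rfl
  have hrepx : orbitRep p.1 [x] = [y] := by rw [← hx, orbitRep_pow_apply, hrep]
  have hidx : orbitIdx p.1 [x] = i := by rw [← hx, hp.1.orbitIdx_eq hrep hi]
  rw [hv, conjugatorFun, List.length_cons, conjugatorAux, hrepx, hidx, ← hv,
    Perm.inv_eq_iff_eq.2 rfl, (ha.state_isTreeAut [y]).1 w]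
  rfl

theorem induction {P : Perm (Vertex d) × Perm (Vertex d) → Vertex d → Prop}
    (nil : ∀ p, IsConjPair p → P p [])
    (step : ∀ p, IsConjPair p → ∀ (ρ : Vertex d) (i : ℕ) (w : Vertex d), ρ.length = 1 →
      orbitRep p.1 ρ = ρ → i < orbitCard p.1 ρ → (∀ q, IsConjPair q → P q w) →
      P p ((p.1 ^ i) (ρ ++ w))) :
    ∀ p, IsConjPair p → ∀ v, P p v := by
  suffices h : ∀ n, ∀ v : Vertex d, v.length = n → ∀ p, IsConjPair p → P p v from
    fun p hp v => h _ v rfl p hp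
  intro n
  induction n using Nat.strong_induction_on with
  | _ n ih =>
    rintro (_ | ⟨x, w⟩) rfl p hp
    · exact nil p hp
    obtain ⟨ρ, i, w', hρ, hrep, hi, hlen, hv⟩ := hp.1.exists_eq_pow_apply_orbitRep x w
    rw [← hv]
    exact step p hp ρ i w' hρ hrep hi fun q hq => ih _ (by simp [hlen]) w' rfl q hq

lemma length_conjugatorFun : ∀ p, IsConjPair p → ∀ v : Vertex d,
    (conjugatorFun p v).length = v.length := by
  refine induction (fun _ _ => rfl) fun p hp ρ i w hρ hrep hi ih => ?_
  rw [hp.conjugatorFun_pow_apply hρ hrep hi, (hp.snd_isTreeAut.pow i).1, (hp.1.pow i).1,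
    List.length_append, List.length_append, hp.pairConj_spec.1.1, ih _ (hp.isConjPair_childPair ρ)]

lemma injective_conjugatorFun :
    ∀ p : Perm (Vertex d) × Perm (Vertex d), IsConjPair p → Injective (conjugatorFun p) := by
  suffices h : ∀ p, IsConjPair p → ∀ v v' : Vertex d,
      conjugatorFun p v = conjugatorFun p v' → v = v' from fun p hp v v' => h p hp v v'
  refine induction (fun p hp v' h => ?_) fun p hp ρ i w hρ hrep hi ih v' h => ?_
  · have := congrArg List.length h
    simp only [length_conjugatorFun p hp] at this
    exact (List.length_eq_zero_iff.1 this.symm).symm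
  obtain _ | ⟨x, w''⟩ := v'
  · have := congrArg List.length h
    simp [length_conjugatorFun p hp, (hp.1.pow i).1] at this
    simp [this.1] at hρ
  obtain ⟨σ, j, w', hσ, hrepσ, hj, -, hv'⟩ := hp.1.exists_eq_pow_apply_orbitRep x w''
  rw [← hv'] at h ⊢
  have hb := hp.snd_isTreeAut
  have ht := hp.pairConj_spec.1
  rw [hp.conjugatorFun_pow_apply hρ hrep hi, hp.conjugatorFun_pow_apply hσ hrepσ hj,
    (hb.pow i).apply_append, (hb.pow j).apply_append] at h
  obtain ⟨h₁, h₂⟩ := List.append_inj h (by simp [(hb.pow i).1, (hb.pow j).1, ht.1, hρ, hσ])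
  rw [hp.snd_pow_apply, hp.snd_pow_apply] at h₁
  have hρσ : ρ = σ := by
    rw [← hrep, ← hrepσ, ← orbitRep_pow_apply p.1 ρ i, (pairConj p).injective h₁,
      orbitRep_pow_apply]
  subst hρσ
  obtain rfl := eq_of_pow_apply_eq hi hj ((pairConj p).injective h₁)
  rw [ih _ (hp.isConjPair_childPair ρ) w' ((state _ _).injective h₂)]

lemma prefix_conjugatorFun : ∀ p, IsConjPair p → ∀ v u : Vertex d,
    conjugatorFun p v <+: conjugatorFun p (v ++ u) := by
  refine induction (fun _ _ _ => List.nil_prefix) fun p hp ρ i w hρ hrep hi ih u => ?_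
  have ha := hp.1.pow i
  have hvu : (p.1 ^ i) (ρ ++ w) ++ u =
      (p.1 ^ i) (ρ ++ (w ++ state (p.1 ^ i)⁻¹ ((p.1 ^ i) (ρ ++ w)) u)) := by
    rw [← List.append_assoc, ← Perm.inv_eq_iff_eq, ha.inv.apply_append]
    simp
  rw [hvu, hp.conjugatorFun_pow_apply hρ hrep hi, hp.conjugatorFun_pow_apply hρ hrep hi]
  exact (hp.snd_isTreeAut.pow i).prefix_mono
    ((List.prefix_append_right_inj _).2 (ih _ (hp.isConjPair_childPair ρ) _))

/-- When `a ^ (i + 1)` returns to `ρ`, this is the same identity for the child pair. -/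
lemma conjugatorFun_apply_fst : ∀ p, IsConjPair p → ∀ v : Vertex d,
    conjugatorFun p (p.1 v) = p.2 (conjugatorFun p v) := by
  refine induction (fun p hp => by rw [hp.1.apply_nil]; exact hp.snd_isTreeAut.apply_nil.symm)
    fun p hp ρ i w hρ hrep hi ih => ?_
  have hstep : ∀ n : ℕ, p.1 ((p.1 ^ n) (ρ ++ w)) = (p.1 ^ (n + 1)) (ρ ++ w) := fun n => by
    rw [pow_succ', Perm.mul_apply]
  have hstep' : ∀ n : ℕ, ∀ v, p.2 ((p.2 ^ n) v) = (p.2 ^ (n + 1)) v := fun n v => by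
    rw [pow_succ', Perm.mul_apply]
  rw [hp.conjugatorFun_pow_apply hρ hrep hi, hstep', hstep]
  rcases (show i + 1 ≤ orbitCard p.1 ρ from hi).lt_or_eq with hlt | heq
  · exact hp.conjugatorFun_pow_apply hρ hrep hlt w
  have hfix : (p.1 ^ (i + 1)) (ρ ++ w) = (p.1 ^ 0) (ρ ++ (childPair p ρ).1 w) := by
    rw [heq, hp.1.pow_orbitCard_apply_append]
    rfl
  rw [hfix, hp.conjugatorFun_pow_apply hρ hrep (hp.1.orbitCard_pos ρ),
    ih _ (hp.isConjPair_childPair ρ), heq, pow_zero, Perm.one_apply,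
    (hp.snd_isTreeAut.pow _).apply_append, hp.snd_pow_apply, pow_orbitCard_apply]
  rfl

lemma conjugator_apply (hp : IsConjPair p) (v : Vertex d) : conjugator p v = conjugatorFun p v := by
  have hinj := injective_conjugatorFun p hp
  rw [conjugator, dif_pos ⟨hinj, surjective_of_injective_of_length_eq hinj
    (length_conjugatorFun p hp)⟩]
  rfl

lemma conjugator_isTreeAut (hp : IsConjPair p) : IsTreeAut (conjugator p) := by
  refine ⟨fun v => ?_, fun v w => ?_⟩
  · rw [hp.conjugator_apply, length_conjugatorFun p hp]
  · rw [hp.conjugator_apply, hp.conjugator_apply]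
    exact prefix_conjugatorFun p hp v w

lemma conjugator_mul_fst (hp : IsConjPair p) : conjugator p * p.1 = p.2 * conjugator p :=
  Equiv.ext fun v => by
    simp only [Perm.mul_apply, hp.conjugator_apply, conjugatorFun_apply_fst p hp]

lemma state_conjugator_of_orbitRep (hp : IsConjPair p) {ρ : Vertex d} (hρ : ρ.length = 1)
    (hrep : orbitRep p.1 ρ = ρ) : state (conjugator p) ρ = conjugator (childPair p ρ) := by
  ext w : 1
  have h := hp.conjugatorFun_pow_apply hρ hrep (hp.1.orbitCard_pos ρ) w
  rw [pow_zero, pow_zero, Perm.one_apply, Perm.one_apply] at h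
  rw [hp.conjugator_isTreeAut.state_apply, hp.conjugator_apply, h,
    (hp.isConjPair_childPair ρ).conjugator_apply, ← hp.pairConj_spec.1.1 ρ, List.drop_left]

lemma descendantPair_mem_OS {f g : Perm (Vertex d)} (hf : IsTreeAut f) (hg : IsTreeAut g)
    (W : Vertex d) (hp : IsConjPair p) (hpf : p.1 ∈ OS f) (hpg : p.2 ∈ OS g) :
    (descendantPair p W).1 ∈ OS f ∧ (descendantPair p W).2 ∈ OS g := by
  induction W generalizing p with
  | nil => exact ⟨hpf, hpg⟩
  | cons x W ih =>
    obtain ⟨h1, h2⟩ := hp.childPair_mem_OS hf hg hpf hpg [x]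
    exact ih (hp.isConjPair_childPair [x]) h1 h2

lemma exists_state_conjugator_eq : ∀ p, IsConjPair p → ∀ v : Vertex d,
    ∃ W : Vertex d, ∃ N < orbitCard p.1 W, (p.1 ^ N) W = v ∧
      state (conjugator p) W = conjugator (descendantPair p W) := by
  refine induction (fun p hp => ⟨[], 0, hp.1.orbitCard_pos [], rfl,
    hp.conjugator_isTreeAut.state_nil⟩) fun p hp ρ i w hρ hrep hi ih => ?_
  obtain ⟨W, N, hN, rfl, hW⟩ := ih _ (hp.isConjPair_childPair ρ)
  obtain ⟨y, rfl⟩ := List.length_eq_one_iff.1 hρ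
  refine ⟨[y] ++ W, i + orbitCard p.1 [y] * N, ?_, ?_, ?_⟩
  · rw [hp.1.orbitCard_append]
    have : N + 1 ≤ orbitCard (signalizer p.1 [y]) W := hN
    nlinarith [Nat.mul_le_mul_left (orbitCard p.1 [y]) this]
  · rw [pow_add, Perm.mul_apply, hp.1.pow_orbitCard_mul_apply_append]
    rfl
  · rw [← hp.conjugator_isTreeAut.state_state, hp.state_conjugator_of_orbitRep hρ hrep, hW]
    rfl

end IsConjPair

lemma state_apply_pow_of_semiconj {X a b : Perm (Vertex d)} (hX : IsTreeAut X) (ha : IsTreeAut a)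
    (hb : IsTreeAut b) (h : X * a = b * X) (N : ℕ) (W : Vertex d) :
    state X ((a ^ N) W) = state (b ^ N) (X W) * state X W * (state (a ^ N) W)⁻¹ := by
  have hN := congrArg (state · W) ((SemiconjBy.pow_right h N : X * a ^ N = b ^ N * X))
  simp only [state_mul hX (ha.pow N), state_mul (hb.pow N) hX] at hN
  rw [← hN, mul_inv_cancel_right]

theorem exists_finiteState_conj {f g : Perm (Vertex d)} (hf : IsTreeAut f) (hg : IsTreeAut g)
    (hpf : (partialSections f).Finite) (hpg : (partialSections g).Finite)
    (hconj : ∃ h : Perm (Vertex d), IsTreeAut h ∧ h * f * h⁻¹ = g) :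
    ∃ h : Perm (Vertex d), IsTreeAut h ∧ FiniteState h ∧ h * f * h⁻¹ = g := by
  have hp : IsConjPair (f, g) := ⟨hf, hconj⟩
  have hH := hp.conjugator_isTreeAut
  have hconj' : conjugator (f, g) * f * (conjugator (f, g))⁻¹ = g := by
    rw [hp.conjugator_mul_fst, mul_inv_cancel_right]
  refine ⟨conjugator (f, g), hH, ?_, hconj'⟩
  have hOS := (hpf.subset (OS_subset_partialSections f)).prod
    (hpg.subset (OS_subset_partialSections g))
  refine ((hpg.mul (hOS.image conjugator)).mul hpf.inv).subset ?_
  rintro _ ⟨v, rfl⟩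
  obtain ⟨W, N, hN, rfl, hW⟩ := IsConjPair.exists_state_conjugator_eq (f, g) hp v
  dsimp only at hN ⊢
  rw [state_apply_pow_of_semiconj hH hf hg hp.conjugator_mul_fst, hW]
  refine Set.mul_mem_mul (Set.mul_mem_mul ⟨_, N, ?_, rfl⟩
    ⟨_, hp.descendantPair_mem_OS hf hg W hf.self_mem_OS hg.self_mem_OS, rfl⟩)
    (Set.inv_mem_inv.2 ⟨W, N, hN.le, rfl⟩)
  have h := orbitCard_conj (conjugator (f, g)) f W
  rw [hconj'] at h
  exact h ▸ hN.le

end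

theorem bounded_conj_contracting_in_FSG_iff_finiteOS_general
    (d : ℕ) (f g : Equiv.Perm (Vertex d))
    (hf : IsTreeAut f) (hg : IsTreeAut g)
    (hbf : BoundedAut f) (hcg : ContractingAut g)
    (hconj : ∃ h : Equiv.Perm (Vertex d), IsTreeAut h ∧ h * f * h⁻¹ = g) :
    (∃ h : Equiv.Perm (Vertex d), IsTreeAut h ∧ FiniteState h ∧ h * f * h⁻¹ = g) ↔
      FiniteOS g := by
  have hpf := hbf.finite_partialSections hf
  constructor
  · rintro ⟨h, hh, hfs, rfl⟩
    exact FiniteOS.conj hf hh hfs (hpf.subset (OS_subset_partialSections f))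
  · intro hOS
    exact exists_finiteState_conj hf hg hpf (hcg.finite_partialSections hg hOS) hconj

/-- Let `f` be a bounded automorphism and `g` a contracting
automorphism which are conjugate in `Aut(T)`.  Then `f` and `g` are conjugate
in the group `F(X)` of finite-state automorphisms if and only if `g` has finite
orbit-signalizer. -/
theorem bounded_conj_contracting_in_FSG_iff_finiteOS
    (d : ℕ) (hd : 2 ≤ d) (f g : Equiv.Perm (Vertex d))
    (hf : IsTreeAut f) (hg : IsTreeAut g)
    (hbf : BoundedAut f) (hcg : ContractingAut g)
    (hconj : ∃ h : Equiv.Perm (Vertex d), IsTreeAut h ∧ h * f * h⁻¹ = g) :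
    (∃ h : Equiv.Perm (Vertex d), IsTreeAut h ∧ FiniteState h ∧ h * f * h⁻¹ = g) ↔
      FiniteOS g :=
  bounded_conj_contracting_in_FSG_iff_finiteOS_general d f g hf hg hbf hcg hconj
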